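/- Let R be a commutative ring, let a_1,...,a_m and b_1,...,b_n be nilpotent elements of R, and set P̃(t) = 1 + a_1 t + ... + a_m t^m and Q̃(t) = 1 + b_1 t + ... + b_n t^n in R[[t]]; note P̃ is a unit in R[[t]]. Let h ∈ R and suppose there exists a polynomial α ∈ R[u] such that α · (u^m + a_1 u^{m-1} + ... + a_m) = h · (u^n + b_1 u^{n-1} + ... + b_n) in R[u]. Then, writing Q̃ · P̃⁻¹ = Σ_{i≥0} c_i t^i in R[[t]], we have h · c_i = 0 for every i > n − m. -/

import Mathlib

open Polynomial PowerSeries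

/-! Since `P` is monic, `α * P = h * Q` forces `deg α ≤ n - m`. Reversing this identity at
degree `n` gives `rev α * P̃ = h * Q̃`, and cancelling the power-series unit `P̃` shows that
`h * S = rev α` is a polynomial of degree at most `n - m`. -/

namespace Polynomial

variable {R : Type*}

theorem reflect_sum [Semiring R] {ι : Type*} (N : ℕ) (s : Finset ι) (f : ι → R[X]) :
    reflect N (∑ i ∈ s, f i) = ∑ i ∈ s, reflect N (f i) :=
  map_sum (⟨⟨reflect N, reflect_zero⟩, fun p q => reflect_add p q N⟩ : R[X] →+ R[X]) f s

theorem isUnit_coe_reverse [CommRing R] {p : R[X]} (hp : p.Monic) :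
    IsUnit (p.reverse : R⟦X⟧) := by
  rw [PowerSeries.isUnit_iff_constantCoeff, constantCoeff_coe, coeff_zero_reverse, hp.leadingCoeff]
  exact isUnit_one

theorem mul_coeff_eq_zero_of_mul_eq_C_mul [CommRing R] {p q α : R[X]} {h : R} {n i : ℕ}
    {S : R⟦X⟧} (hp : p.Monic) (hq : q.natDegree ≤ n) (hα : α * p = C h * q)
    (hS : (p.reverse : R⟦X⟧) * S = reflect n q) (hi : n < i + p.natDegree) :
    h * PowerSeries.coeff i S = 0 := by
  have hrev : (p.reverse : R⟦X⟧) * (PowerSeries.C h * S) = reflect n (α * p) := by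
    rw [mul_left_comm, hS, hα, reflect_C_mul, coe_mul, coe_C]
  obtain rfl | hα0 := eq_or_ne α 0
  · have hhS : PowerSeries.C h * S = 0 :=
      (isUnit_coe_reverse hp).mul_right_eq_zero.mp (by simpa using hrev)
    simpa using congr(PowerSeries.coeff i $hhS)
  have hdeg : α.natDegree + p.natDegree ≤ n := by
    rw [add_comm, ← hp.natDegree_mul' hα0, mul_comm, hα]
    exact (natDegree_C_mul_le _ _).trans hq
  have hhS : PowerSeries.C h * S = reflect (n - p.natDegree) α := by
    apply (isUnit_coe_reverse hp).mul_left_cancel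
    rw [hrev, ← Nat.sub_add_cancel (le_of_add_le_right hdeg),
      reflect_mul α p (by omega) le_rfl, Nat.add_sub_cancel, coe_mul, mul_comm, reverse]
  have := congr(PowerSeries.coeff i $hhS)
  rwa [PowerSeries.coeff_C_mul, coeff_coe, coeff_reflect, revAt_eq_self_of_lt (by omega),
    coeff_eq_zero_of_natDegree_lt (by omega)] at this

noncomputable def monicOfCoeffs [Semiring R] {N : ℕ} (c : Fin N → R) : R[X] :=
  X ^ N + ∑ i : Fin N, C (c i) * X ^ (N - 1 - (i : ℕ))

section monicOfCoeffs

variable [Semiring R] {N : ℕ} (c : Fin N → R)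

theorem degree_sum_C_mul_X_pow_rev_lt :
    degree (∑ i : Fin N, C (c i) * X ^ (N - 1 - (i : ℕ))) < N := by
  rw [← Equiv.sum_comp Fin.revPerm]
  convert degree_sum_fin_lt (c ∘ Fin.rev) using 5 with i
  · rfl
  · rw [Fin.revPerm_apply, Fin.val_rev]
    omega

theorem monicOfCoeffs_monic : (monicOfCoeffs c).Monic :=
  monic_X_pow_add (degree_sum_C_mul_X_pow_rev_lt c)

theorem natDegree_monicOfCoeffs [Nontrivial R] : (monicOfCoeffs c).natDegree = N := by
  rw [monicOfCoeffs, natDegree_add_eq_left_of_degree_lt, natDegree_X_pow]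
  rw [degree_X_pow]
  exact degree_sum_C_mul_X_pow_rev_lt c

theorem reflect_monicOfCoeffs :
    reflect N (monicOfCoeffs c) = 1 + ∑ i : Fin N, C (c i) * X ^ ((i : ℕ) + 1) := by
  rw [monicOfCoeffs, reflect_add, reflect_monomial, revAt_le le_rfl, Nat.sub_self, pow_zero,
    reflect_sum]
  congr 1
  refine Finset.sum_congr rfl fun i _ => ?_
  rw [reflect_C_mul_X_pow, revAt_le (by omega)]
  congr 2
  omega

theorem coe_reflect_monicOfCoeffs :
    (reflect N (monicOfCoeffs c) : R⟦X⟧) =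
      1 + ∑ i : Fin N, PowerSeries.C (c i) * PowerSeries.X ^ ((i : ℕ) + 1) := by
  simp only [reflect_monicOfCoeffs, ← coeToPowerSeries.ringHom_apply, map_add, map_one, map_sum,
    map_mul, map_pow]
  simp [coeToPowerSeries.ringHom_apply]

end monicOfCoeffs

end Polynomial

theorem stmt_1_general {R : Type*} [CommRing R] (m n : ℕ)
    (a : Fin m → R) (b : Fin n → R)
    (h : R)
    (hα : ∃ α : Polynomial R,
      α * (Polynomial.X ^ m + ∑ i : Fin m, Polynomial.C (a i) * Polynomial.X ^ (m - 1 - (i : ℕ)))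
        = Polynomial.C h *
          (Polynomial.X ^ n + ∑ j : Fin n, Polynomial.C (b j) * Polynomial.X ^ (n - 1 - (j : ℕ))))
    (S : PowerSeries R)
    -- `S = Q̃ ⬝ P̃⁻¹`, i.e. `P̃ ⬝ S = Q̃`:
    (hS : (1 + ∑ i : Fin m, PowerSeries.C (a i) * PowerSeries.X ^ ((i : ℕ) + 1)) * S
        = 1 + ∑ j : Fin n, PowerSeries.C (b j) * PowerSeries.X ^ ((j : ℕ) + 1)) :
    ∀ i : ℕ, (n : ℤ) - (m : ℤ) < (i : ℤ) → h * PowerSeries.coeff i S = 0 := by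
  nontriviality R
  intro i hi
  obtain ⟨α, hα⟩ := hα
  refine mul_coeff_eq_zero_of_mul_eq_C_mul (monicOfCoeffs_monic a)
    (natDegree_monicOfCoeffs b).le hα ?_ ?_
  · rwa [reverse, natDegree_monicOfCoeffs, coe_reflect_monicOfCoeffs, coe_reflect_monicOfCoeffs]
  · rw [natDegree_monicOfCoeffs]
    omega

/-- Corollary 3.2 (algebraic form). Let `a₁,…,aₘ` and `b₁,…,bₙ` be nilpotent,
`P̃(t) = 1 + a₁ t + ⋯ + aₘ tᵐ`, `Q̃(t) = 1 + b₁ t + ⋯ + bₙ tⁿ`.  If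
`α ⬝ (uᵐ + a₁ u^{m-1} + ⋯ + aₘ) = h ⬝ (uⁿ + b₁ u^{n-1} + ⋯ + bₙ)` for some
polynomial `α`, then the coefficients `cᵢ` of `Q̃ ⬝ P̃⁻¹` satisfy `h * cᵢ = 0`
for all `i > n - m`. -/
theorem stmt_1 {R : Type*} [CommRing R] (m n : ℕ)
    (a : Fin m → R) (b : Fin n → R)
    (ha : ∀ i, IsNilpotent (a i)) (hb : ∀ j, IsNilpotent (b j))
    (h : R)
    (hα : ∃ α : Polynomial R,
      α * (Polynomial.X ^ m + ∑ i : Fin m, Polynomial.C (a i) * Polynomial.X ^ (m - 1 - (i : ℕ)))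
        = Polynomial.C h *
          (Polynomial.X ^ n + ∑ j : Fin n, Polynomial.C (b j) * Polynomial.X ^ (n - 1 - (j : ℕ))))
    (S : PowerSeries R)
    -- `S = Q̃ ⬝ P̃⁻¹`, i.e. `P̃ ⬝ S = Q̃`:
    (hS : (1 + ∑ i : Fin m, PowerSeries.C (a i) * PowerSeries.X ^ ((i : ℕ) + 1)) * S
        = 1 + ∑ j : Fin n, PowerSeries.C (b j) * PowerSeries.X ^ ((j : ℕ) + 1)) :
    ∀ i : ℕ, (n : ℤ) - (m : ℤ) < (i : ℤ) → h * PowerSeries.coeff i S = 0 :=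
  stmt_1_general m n a b h hα S hS
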